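/- Let A ∈ ℝ^{m×n}, y ∈ ℝᵐ, and μ, γ, σ_x, σ_ε > 0. Define G(x, ε) := ½σ_x⁻²‖x‖₂² + ½σ_ε⁻²‖ε‖₂² − μ·(⁽γ⁾‖·‖₁)(y − (Ax + ε)) for (x, ε) ∈ ℝⁿ × ℝᵐ. Then G is convex jointly in (x, ε) if and only if μ·(σ_ε² + σ_x²·λ_max(AᵀA)) ≤ γ, where λ_max(AᵀA) is the largest eigenvalue of AᵀA. -/

import Mathlib

open Matrix

noncomputable section

/-- The ℓ₁ norm on ℝᵐ. -/
def l1norm {m : ℕ} (x : EuclideanSpace ℝ (Fin m)) : ℝ := ∑ i, |x i|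

/-- The Moreau envelope of index `γ` of a real-valued function on ℝᵐ. -/
def moreauEnv {m : ℕ} (γ : ℝ) (f : EuclideanSpace ℝ (Fin m) → ℝ)
    (x : EuclideanSpace ℝ (Fin m)) : ℝ :=
  ⨅ y : EuclideanSpace ℝ (Fin m), (f y + ‖x - y‖ ^ 2 / (2 * γ))

namespace SorrAux

lemma enorm_sq {k : ℕ} (x : EuclideanSpace ℝ (Fin k)) : ‖x‖ ^ 2 = ∑ i, x i ^ 2 := by
  rw [EuclideanSpace.norm_eq, Real.sq_sqrt (by positivity)]
  simp [sq_abs]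

lemma coord_le_norm {k : ℕ} (x : EuclideanSpace ℝ (Fin k)) (i : Fin k) : |x i| ≤ ‖x‖ := by
  have h1 : x i ^ 2 ≤ ‖x‖ ^ 2 := by
    rw [enorm_sq]
    exact Finset.single_le_sum (f := fun j => x j ^ 2) (fun j _ => sq_nonneg _) (Finset.mem_univ i)
  have := Real.sqrt_le_sqrt h1
  rwa [Real.sqrt_sq_eq_abs, Real.sqrt_sq (norm_nonneg x)] at this

lemma inner_dot {k : ℕ} (u v : EuclideanSpace ℝ (Fin k)) :
    (inner ℝ u v) = ∑ j, u j * v j := by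
  simp [PiLp.inner_apply, RCLike.inner_apply, starRingEnd_apply]
  exact Finset.sum_congr rfl fun j _ => mul_comm _ _

lemma comb_norm {E : Type*} [NormedAddCommGroup E] [InnerProductSpace ℝ E]
    {a b : ℝ} (hab : a + b = 1) (u v : E) :
    ‖a • u + b • v‖ ^ 2 = a * ‖u‖ ^ 2 + b * ‖v‖ ^ 2 - a * b * ‖u - v‖ ^ 2 := by
  obtain rfl : b = 1 - a := by linarith
  have h1 := norm_add_sq_real (a • u) ((1-a) • v)
  have h2 := norm_sub_sq_real u v
  simp only [norm_smul, Real.norm_eq_abs, mul_pow, sq_abs,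
    real_inner_smul_left, real_inner_smul_right] at h1
  nlinarith [h1, h2]

section Moreau

variable {m : ℕ} {γ : ℝ}

lemma l1norm_nonneg (z : EuclideanSpace ℝ (Fin m)) : 0 ≤ l1norm z :=
  Finset.sum_nonneg fun i _ => abs_nonneg _

lemma moreau_bdd (hγ : 0 < γ) (z : EuclideanSpace ℝ (Fin m)) :
    BddBelow (Set.range fun w : EuclideanSpace ℝ (Fin m) => l1norm w + ‖z - w‖ ^ 2 / (2 * γ)) := by
  refine ⟨0, ?_⟩
  rintro x ⟨w, rfl⟩
  have := l1norm_nonneg w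
  positivity

lemma moreau_le (hγ : 0 < γ) (z w : EuclideanSpace ℝ (Fin m)) :
    moreauEnv γ l1norm z ≤ l1norm w + ‖z - w‖ ^ 2 / (2 * γ) :=
  ciInf_le (moreau_bdd hγ z) w

lemma le_moreau {c : ℝ} (z : EuclideanSpace ℝ (Fin m))
    (h : ∀ w, c ≤ l1norm w + ‖z - w‖ ^ 2 / (2 * γ)) : c ≤ moreauEnv γ l1norm z :=
  le_ciInf h

lemma moreau_nonneg (hγ : 0 < γ) (z : EuclideanSpace ℝ (Fin m)) :
    0 ≤ moreauEnv γ l1norm z :=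
  le_moreau z fun w => by have := l1norm_nonneg w; positivity

lemma l1norm_zero : l1norm (0 : EuclideanSpace ℝ (Fin m)) = 0 := by
  simp [l1norm]

lemma moreau_zero (hγ : 0 < γ) : moreauEnv γ l1norm (0 : EuclideanSpace ℝ (Fin m)) = 0 := by
  refine le_antisymm ?_ (moreau_nonneg hγ 0)
  have := moreau_le hγ (0 : EuclideanSpace ℝ (Fin m)) 0
  simpa [l1norm_zero] using this

lemma moreau_small (hγ : 0 < γ) (z : EuclideanSpace ℝ (Fin m)) (hz : ∀ i, |z i| ≤ γ) :
    moreauEnv γ l1norm z = ‖z‖ ^ 2 / (2 * γ) := by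
  refine le_antisymm ?_ ?_
  · have := moreau_le hγ z 0
    simpa [l1norm_zero] using this
  · refine le_moreau z fun w => ?_
    have key : ∑ i, z i ^ 2 ≤ ∑ i, (2 * γ * |w i| + (z i - w i) ^ 2) := by
      refine Finset.sum_le_sum fun i _ => ?_
      have h1 : z i * w i ≤ γ * |w i| := by
        calc z i * w i ≤ |z i * w i| := le_abs_self _
        _ = |z i| * |w i| := abs_mul _ _
        _ ≤ γ * |w i| := mul_le_mul_of_nonneg_right (hz i) (abs_nonneg _)
      nlinarith [h1, sq_nonneg (w i)]
    have hsum : ∑ i, (2 * γ * |w i| + (z i - w i) ^ 2)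
        = 2 * γ * l1norm w + ∑ i, (z i - w i) ^ 2 := by
      rw [Finset.sum_add_distrib, ← Finset.mul_sum, l1norm]
    have hzw : ‖z - w‖ ^ 2 = ∑ i, (z i - w i) ^ 2 := by
      rw [enorm_sq]
      congr 1
    have hz2 : ‖z‖ ^ 2 = ∑ i, z i ^ 2 := enorm_sq z
    rw [hsum] at key
    have h2γ : (0:ℝ) < 2 * γ := by positivity
    calc ‖z‖ ^ 2 / (2 * γ) = (∑ i, z i ^ 2) / (2 * γ) := by rw [hz2]
      _ ≤ (2 * γ * l1norm w + ∑ i, (z i - w i) ^ 2) / (2 * γ) := by gcongr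
      _ = l1norm w + (∑ i, (z i - w i) ^ 2) / (2 * γ) := by
          rw [add_div, mul_div_cancel_left₀ _ (ne_of_gt h2γ)]
      _ = l1norm w + ‖z - w‖ ^ 2 / (2 * γ) := by rw [hzw]

lemma moreau_combo (hγ : 0 < γ) {a b : ℝ} (ha : 0 ≤ a) (hb : 0 ≤ b) (hab : a + b = 1)
    (z₁ z₂ : EuclideanSpace ℝ (Fin m)) :
    a * moreauEnv γ l1norm z₁ + b * moreauEnv γ l1norm z₂ - a * b * ‖z₁ - z₂‖ ^ 2 / (2 * γ)
      ≤ moreauEnv γ l1norm (a • z₁ + b • z₂) := by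
  obtain rfl : b = 1 - a := by linarith
  refine le_moreau _ fun w => ?_
  have hid : a • z₁ + (1-a) • z₂ - w = a • (z₁ - w) + (1-a) • (z₂ - w) := by
    module
  have hnorm : ‖a • z₁ + (1-a) • z₂ - w‖ ^ 2
      = a * ‖z₁ - w‖ ^ 2 + (1-a) * ‖z₂ - w‖ ^ 2 - a * (1-a) * ‖z₁ - z₂‖ ^ 2 := by
    rw [hid, comb_norm hab]
    congr 3
    abel
  have h1 := moreau_le hγ z₁ w
  have h2 := moreau_le hγ z₂ w
  have hfw : l1norm w + ‖a • z₁ + (1-a) • z₂ - w‖ ^ 2 / (2 * γ)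
      = a * (l1norm w + ‖z₁ - w‖ ^ 2 / (2 * γ)) + (1-a) * (l1norm w + ‖z₂ - w‖ ^ 2 / (2 * γ))
        - a * (1-a) * ‖z₁ - z₂‖ ^ 2 / (2 * γ) := by
    rw [hnorm]
    field_simp
    ring
  rw [hfw]
  have := mul_le_mul_of_nonneg_left h1 ha
  have := mul_le_mul_of_nonneg_left h2 hb
  linarith

end Moreau

section Spectral

variable {m n : ℕ} (A : Matrix (Fin m) (Fin n) ℝ)

/-- The eigenvalue set of `AᵀA`. -/
def ESet : Set ℝ := {t : ℝ | ∃ v : Fin n → ℝ, v ≠ 0 ∧ (Aᵀ * A).mulVec v = t • v}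

lemma herm : (Aᵀ * A).IsHermitian := by
  have := Matrix.isHermitian_conjTranspose_mul_self A
  rwa [Matrix.conjTranspose_eq_transpose_of_trivial] at this

lemma AtA_symm : (Aᵀ * A)ᵀ = Aᵀ * A := by
  have := herm A
  rwa [Matrix.IsHermitian, Matrix.conjTranspose_eq_transpose_of_trivial] at this

lemma symm_dot (u v : Fin n → ℝ) :
    u ⬝ᵥ ((Aᵀ * A) *ᵥ v) = ((Aᵀ * A) *ᵥ u) ⬝ᵥ v := by
  rw [Matrix.dotProduct_mulVec, ← Matrix.mulVec_transpose, AtA_symm]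

lemma dot_AtA (v : Fin n → ℝ) : v ⬝ᵥ ((Aᵀ * A) *ᵥ v) = (A *ᵥ v) ⬝ᵥ (A *ᵥ v) := by
  rw [← Matrix.mulVec_mulVec, Matrix.dotProduct_mulVec, Matrix.vecMul_transpose]

lemma dot_self_nonneg (v : Fin n → ℝ) : 0 ≤ v ⬝ᵥ v :=
  Finset.sum_nonneg fun i _ => mul_self_nonneg _

lemma ESet_subset : ESet A ⊆ Set.range (herm A).eigenvalues := by
  rintro t ⟨v, hv, hmv⟩
  classical
  set b := (herm A).eigenvectorBasis with hb
  set w : EuclideanSpace ℝ (Fin n) := (WithLp.equiv 2 (Fin n → ℝ)).symm v with hw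
  have hwne : w ≠ 0 := by simpa [hw] using hv
  have : ∃ i, b.repr w i ≠ 0 := by
    by_contra h
    push_neg at h
    apply hwne
    have : b.repr w = 0 := by ext i; exact h i
    simpa using b.repr.map_eq_zero_iff.mp this
  obtain ⟨i, hi⟩ := this
  refine ⟨i, ?_⟩
  have hrepr : b.repr w i = (WithLp.equiv 2 (Fin n → ℝ) (b i)) ⬝ᵥ v := by
    rw [b.repr_apply_apply, inner_dot]
    rfl
  have hmv' : (Aᵀ * A) *ᵥ (WithLp.equiv 2 (Fin n → ℝ) (b i))
      = (herm A).eigenvalues i • (WithLp.equiv 2 (Fin n → ℝ) (b i)) :=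
    (herm A).mulVec_eigenvectorBasis i
  have key : (herm A).eigenvalues i * (b.repr w i) = t * (b.repr w i) := by
    have h1 : (WithLp.equiv 2 (Fin n → ℝ) (b i)) ⬝ᵥ ((Aᵀ * A) *ᵥ v)
        = t * ((WithLp.equiv 2 (Fin n → ℝ) (b i)) ⬝ᵥ v) := by
      rw [hmv, dotProduct_smul, smul_eq_mul]
    have h2 : (WithLp.equiv 2 (Fin n → ℝ) (b i)) ⬝ᵥ ((Aᵀ * A) *ᵥ v)
        = (herm A).eigenvalues i * ((WithLp.equiv 2 (Fin n → ℝ) (b i)) ⬝ᵥ v) := by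
      rw [symm_dot, hmv', smul_dotProduct, smul_eq_mul]
    rw [hrepr]
    rw [h2] at h1
    exact h1
  exact mul_right_cancel₀ hi key

lemma ESet_finite : (ESet A).Finite :=
  Set.Finite.subset (Set.finite_range _) (ESet_subset A)

lemma ESet_bdd : BddAbove (ESet A) :=
  ((Set.finite_range (herm A).eigenvalues).subset (ESet_subset A)).bddAbove

/-- largest eigenvalue -/
def lam : ℝ := sSup (ESet A)

lemma eig_mem (i : Fin n) : (herm A).eigenvalues i ∈ ESet A := by
  refine ⟨WithLp.equiv 2 (Fin n → ℝ) ((herm A).eigenvectorBasis i), ?_,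
    (herm A).mulVec_eigenvectorBasis i⟩
  have hne := (herm A).eigenvectorBasis.orthonormal.ne_zero i
  intro h
  apply hne
  have := congrArg (WithLp.equiv 2 (Fin n → ℝ)).symm h
  simpa using this

lemma mem_nonneg {t : ℝ} (ht : t ∈ ESet A) : 0 ≤ t := by
  obtain ⟨v, hv, hmv⟩ := ht
  have h1 : v ⬝ᵥ ((Aᵀ * A) *ᵥ v) = t * (v ⬝ᵥ v) := by
    rw [hmv, dotProduct_smul, smul_eq_mul]
  have h2 : 0 ≤ v ⬝ᵥ ((Aᵀ * A) *ᵥ v) := by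
    rw [dot_AtA]; exact dot_self_nonneg _
  have h3 : 0 < v ⬝ᵥ v := by
    rcases lt_or_eq_of_le (dot_self_nonneg v) with h | h
    · exact h
    · exact absurd ((dotProduct_self_eq_zero).mp h.symm) hv
  nlinarith [h1, h2, h3]

lemma lam_nonneg : 0 ≤ lam A := by
  rcases Set.eq_empty_or_nonempty (ESet A) with h | h
  · simp [lam, h, Real.sSup_empty]
  · obtain ⟨t, ht⟩ := h
    exact le_trans (mem_nonneg A ht) (le_csSup (ESet_bdd A) ht)

lemma lam_mem_of_pos (h : 0 < lam A) : lam A ∈ ESet A := by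
  rcases Set.eq_empty_or_nonempty (ESet A) with he | he
  · exfalso
    rw [lam, he, Real.sSup_empty] at h
    exact lt_irrefl _ h
  · exact Set.Nonempty.csSup_mem he (ESet_finite A)

lemma spec_bound (x : Fin n → ℝ) : (A *ᵥ x) ⬝ᵥ (A *ᵥ x) ≤ lam A * (x ⬝ᵥ x) := by
  classical
  set b := (herm A).eigenvectorBasis with hb
  set w : EuclideanSpace ℝ (Fin n) := (WithLp.equiv 2 (Fin n → ℝ)).symm x with hw
  set Sx : EuclideanSpace ℝ (Fin n) := (WithLp.equiv 2 (Fin n → ℝ)).symm ((Aᵀ * A) *ᵥ x)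
    with hSx
  have key : ∀ i, (inner ℝ (b i) Sx) = (herm A).eigenvalues i * (inner ℝ (b i) w) := by
    intro i
    have e1 : (inner ℝ (b i) Sx) = (WithLp.equiv 2 (Fin n → ℝ) (b i)) ⬝ᵥ ((Aᵀ * A) *ᵥ x) := by
      rw [inner_dot]; rfl
    have e2 : (inner ℝ (b i) w) = (WithLp.equiv 2 (Fin n → ℝ) (b i)) ⬝ᵥ x := by
      rw [inner_dot]; rfl
    rw [e1, e2, symm_dot, show (Aᵀ * A) *ᵥ (WithLp.equiv 2 (Fin n → ℝ) (b i)) = (herm A).eigenvalues i • (WithLp.equiv 2 (Fin n → ℝ) (b i)) from (herm A).mulVec_eigenvectorBasis i, smul_dotProduct,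
      smul_eq_mul]
  have parse1 : (inner ℝ w Sx) = ∑ i, (inner ℝ w (b i)) * (inner ℝ (b i) Sx) :=
    (b.sum_inner_mul_inner w Sx).symm
  have parse2 : (inner ℝ w w) = ∑ i, (inner ℝ (b i) w) ^ 2 := by
    rw [← b.sum_inner_mul_inner w w]
    refine Finset.sum_congr rfl fun i _ => ?_
    rw [real_inner_comm w (b i), sq]
  have hxx : x ⬝ᵥ x = (inner ℝ w w) := by rw [inner_dot]; rfl
  have hxSx : x ⬝ᵥ ((Aᵀ * A) *ᵥ x) = (inner ℝ w Sx) := by rw [inner_dot]; rfl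
  rw [← dot_AtA, hxSx, hxx, parse1, parse2, Finset.mul_sum]
  refine Finset.sum_le_sum fun i _ => ?_
  rw [key i, real_inner_comm w (b i)]
  have hle : (herm A).eigenvalues i ≤ lam A := le_csSup (ESet_bdd A) (eig_mem A i)
  nlinarith [sq_nonneg ((inner ℝ (b i) w)), hle]

lemma T_norm_sq_le (x : EuclideanSpace ℝ (Fin n)) :
    ‖Matrix.toEuclideanLin A x‖ ^ 2 ≤ lam A * ‖x‖ ^ 2 := by
  have h1 : ‖Matrix.toEuclideanLin A x‖ ^ 2
      = (A *ᵥ (WithLp.equiv 2 (Fin n → ℝ) x)) ⬝ᵥ (A *ᵥ (WithLp.equiv 2 (Fin n → ℝ) x)) := by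
    rw [enorm_sq]
    simp [dotProduct, sq, Matrix.toEuclideanLin_apply]
  have h2 : ‖x‖ ^ 2 = (WithLp.equiv 2 (Fin n → ℝ) x) ⬝ᵥ (WithLp.equiv 2 (Fin n → ℝ) x) := by
    rw [enorm_sq]
    simp [dotProduct, sq]
  rw [h1, h2]
  exact spec_bound A _

end Spectral

section Main

variable {m n : ℕ} (A : Matrix (Fin m) (Fin n) ℝ) {μ γ σx σε : ℝ}

lemma quad_bound (hμ : 0 < μ) (hγ : 0 < γ) (hσx : 0 < σx) (hσε : 0 < σε)
    (hcond : μ * (σε ^ 2 + σx ^ 2 * lam A) ≤ γ)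
    (x : EuclideanSpace ℝ (Fin n)) (ε : EuclideanSpace ℝ (Fin m)) :
    μ * ‖Matrix.toEuclideanLin A x + ε‖ ^ 2 / (2 * γ)
      ≤ ‖x‖ ^ 2 / (2 * σx ^ 2) + ‖ε‖ ^ 2 / (2 * σε ^ 2) := by
  set s := Real.sqrt (lam A) with hs
  have hs2 : s ^ 2 = lam A := Real.sq_sqrt (lam_nonneg A)
  have hs0 : 0 ≤ s := Real.sqrt_nonneg _
  have hTx : ‖Matrix.toEuclideanLin A x‖ ≤ s * ‖x‖ := by
    have h1 : ‖Matrix.toEuclideanLin A x‖ ^ 2 ≤ (s * ‖x‖) ^ 2 := by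
      rw [mul_pow, hs2]
      exact T_norm_sq_le A x
    have := Real.sqrt_le_sqrt h1
    rwa [Real.sqrt_sq (norm_nonneg _), Real.sqrt_sq (by positivity)] at this
  have hN : ‖Matrix.toEuclideanLin A x + ε‖ ≤ s * ‖x‖ + ‖ε‖ :=
    (norm_add_le _ _).trans (by linarith)
  have hN2 : ‖Matrix.toEuclideanLin A x + ε‖ ^ 2 ≤ (s * ‖x‖ + ‖ε‖) ^ 2 :=
    pow_le_pow_left₀ (norm_nonneg _) hN 2
  set a := ‖x‖
  set e := ‖ε‖
  have ha : 0 ≤ a := norm_nonneg _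
  have he : 0 ≤ e := norm_nonneg _
  have hcond' : μ * (σε ^ 2 + σx ^ 2 * s ^ 2) ≤ γ := by rw [hs2]; exact hcond
  have hqpos : (0:ℝ) ≤ a ^ 2 * σε ^ 2 + e ^ 2 * σx ^ 2 := by positivity
  have key : μ * (s * a + e) ^ 2 * (σx ^ 2 * σε ^ 2)
      ≤ γ * (a ^ 2 * σε ^ 2 + e ^ 2 * σx ^ 2) := by
    nlinarith [mul_le_mul_of_nonneg_right hcond' hqpos,
      mul_nonneg hμ.le (sq_nonneg (σx ^ 2 * s * e - σε ^ 2 * a))]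
  rw [div_add_div _ _ (by positivity : (2 * σx ^ 2 : ℝ) ≠ 0)
    (by positivity : (2 * σε ^ 2 : ℝ) ≠ 0),
    div_le_div_iff₀ (by positivity) (by positivity)]
  have hmulN : μ * ‖Matrix.toEuclideanLin A x + ε‖ ^ 2 ≤ μ * (s * a + e) ^ 2 :=
    mul_le_mul_of_nonneg_left hN2 hμ.le
  nlinarith [key, mul_le_mul_of_nonneg_right hmulN (by positivity : (0:ℝ) ≤ σx ^ 2 * σε ^ 2)]

set_option maxHeartbeats 1000000 in
lemma suff (hμ : 0 < μ) (hγ : 0 < γ) (hσx : 0 < σx) (hσε : 0 < σε)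
    (y : EuclideanSpace ℝ (Fin m))
    (hcond : μ * (σε ^ 2 + σx ^ 2 * lam A) ≤ γ) :
    ConvexOn ℝ Set.univ
      (fun p : EuclideanSpace ℝ (Fin n) × EuclideanSpace ℝ (Fin m) =>
        ‖p.1‖ ^ 2 / (2 * σx ^ 2) + ‖p.2‖ ^ 2 / (2 * σε ^ 2) -
          μ * moreauEnv γ l1norm (y - (Matrix.toEuclideanLin A p.1 + p.2))) := by
  refine ⟨convex_univ, ?_⟩
  rintro p - q - a b ha hb hab
  simp only [smul_eq_mul]
  set T := Matrix.toEuclideanLin A with hT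
  set r₁ := y - (T p.1 + p.2) with hr₁
  set r₂ := y - (T q.1 + q.2) with hr₂
  have hfst : (a • p + b • q).1 = a • p.1 + b • q.1 := rfl
  have hsnd : (a • p + b • q).2 = a • p.2 + b • q.2 := rfl
  have hres : y - (T (a • p.1 + b • q.1) + (a • p.2 + b • q.2)) = a • r₁ + b • r₂ := by
    rw [hr₁, hr₂]
    obtain rfl : b = 1 - a := by linarith
    rw [map_add, _root_.map_smul, _root_.map_smul]
    module
  have henv := moreau_combo hγ ha hb hab r₁ r₂
  have hr12 : r₁ - r₂ = -(T (p.1 - q.1) + (p.2 - q.2)) := by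
    rw [hr₁, hr₂, map_sub]
    module
  have hq := quad_bound A hμ hγ hσx hσε hcond (p.1 - q.1) (p.2 - q.2)
  have hr12n : ‖r₁ - r₂‖ = ‖T (p.1 - q.1) + (p.2 - q.2)‖ := by rw [hr12, norm_neg]
  have hx := comb_norm hab p.1 q.1
  have he := comb_norm hab p.2 q.2
  rw [hfst, hsnd, hres, hx, he]
  have hμenv := mul_le_mul_of_nonneg_left henv hμ.le
  have hab2 : 0 ≤ a * b := mul_nonneg ha hb
  have hqs := mul_le_mul_of_nonneg_left hq hab2
  rw [← hr12n] at hqs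
  ring_nf at hμenv hqs ⊢
  linarith

lemma exists_bad (hm : 0 < m) (hμ : 0 < μ) (hγ : 0 < γ) (hσx : 0 < σx) (hσε : 0 < σε)
    (hc : γ < μ * (σε ^ 2 + σx ^ 2 * lam A)) :
    ∃ (d₁ : EuclideanSpace ℝ (Fin n)) (d₂ : EuclideanSpace ℝ (Fin m)),
      ‖d₁‖ ^ 2 / (2 * σx ^ 2) + ‖d₂‖ ^ 2 / (2 * σε ^ 2)
        < μ * ‖Matrix.toEuclideanLin A d₁ + d₂‖ ^ 2 / (2 * γ) := by
  rcases (lam_nonneg A).eq_or_lt with h0 | hpos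
  · -- lam = 0
    refine ⟨0, EuclideanSpace.single ⟨0, hm⟩ 1, ?_⟩
    have h1 : ‖EuclideanSpace.single (⟨0, hm⟩ : Fin m) (1:ℝ)‖ = 1 := by
      rw [EuclideanSpace.norm_single, norm_one]
    rw [map_zero, zero_add, h1, norm_zero]
    have hγσ : γ < μ * σε ^ 2 := by rw [← h0] at hc; linarith
    have hz : (0:ℝ) ^ 2 / (2 * σx ^ 2) = 0 := by simp
    rw [hz, zero_add, one_pow, mul_one, div_lt_div_iff₀ (by positivity) (by positivity)]
    nlinarith [hγσ]
  · -- lam > 0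
    obtain ⟨v, hv, hmv⟩ := lam_mem_of_pos A hpos
    set l := lam A with hl
    set vE : EuclideanSpace ℝ (Fin n) := (WithLp.equiv 2 (Fin n → ℝ)).symm v with hvE
    set AvE : EuclideanSpace ℝ (Fin m) := (WithLp.equiv 2 (Fin m → ℝ)).symm (A *ᵥ v) with hAvE
    have hTv : Matrix.toEuclideanLin A vE = AvE := rfl
    set V := v ⬝ᵥ v with hV
    have hVpos : 0 < V := by
      rcases lt_or_eq_of_le (dot_self_nonneg v) with h | h
      · exact h
      · exact absurd ((dotProduct_self_eq_zero).mp h.symm) hv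
    have hvE2 : ‖vE‖ ^ 2 = V := by
      rw [enorm_sq]
      simp [hV, dotProduct, sq, hvE]
    have hAvE2 : ‖AvE‖ ^ 2 = l * V := by
      rw [enorm_sq]
      have : ∑ i, AvE i ^ 2 = (A *ᵥ v) ⬝ᵥ (A *ᵥ v) := by
        simp [dotProduct, sq, hAvE]
      rw [this, ← dot_AtA, hmv, dotProduct_smul, smul_eq_mul]
    refine ⟨(σx ^ 2 * l) • vE, (σε ^ 2) • AvE, ?_⟩
    have hTd : Matrix.toEuclideanLin A ((σx ^ 2 * l) • vE) + (σε ^ 2) • AvE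
        = (σx ^ 2 * l + σε ^ 2) • AvE := by
      rw [_root_.map_smul, hTv, ← add_smul]
    rw [hTd]
    have e1 : ‖(σx ^ 2 * l) • vE‖ ^ 2 = (σx ^ 2 * l) ^ 2 * V := by
      rw [norm_smul, Real.norm_eq_abs, abs_of_pos (by positivity), mul_pow, hvE2]
    have e2 : ‖(σε ^ 2) • AvE‖ ^ 2 = (σε ^ 2) ^ 2 * (l * V) := by
      rw [norm_smul, Real.norm_eq_abs, abs_of_pos (by positivity), mul_pow, hAvE2]
    have e3 : ‖(σx ^ 2 * l + σε ^ 2) • AvE‖ ^ 2 = (σx ^ 2 * l + σε ^ 2) ^ 2 * (l * V) := by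
      rw [norm_smul, Real.norm_eq_abs, abs_of_pos (by positivity), mul_pow, hAvE2]
    rw [e1, e2, e3]
    rw [div_add_div _ _ (by positivity : (2 * σx ^ 2 : ℝ) ≠ 0)
      (by positivity : (2 * σε ^ 2 : ℝ) ≠ 0),
      div_lt_div_iff₀ (by positivity) (by positivity)]
    nlinarith [mul_lt_mul_of_pos_left hc
      (show (0:ℝ) < 4 * σx ^ 2 * σε ^ 2 * l * V * (σx ^ 2 * l + σε ^ 2) by positivity)]

set_option maxHeartbeats 1000000 in
lemma violation (hμ : 0 < μ) (hγ : 0 < γ) (hσx : 0 < σx) (hσε : 0 < σε)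
    (y : EuclideanSpace ℝ (Fin m))
    (hconv : ConvexOn ℝ Set.univ
      (fun p : EuclideanSpace ℝ (Fin n) × EuclideanSpace ℝ (Fin m) =>
        ‖p.1‖ ^ 2 / (2 * σx ^ 2) + ‖p.2‖ ^ 2 / (2 * σε ^ 2) -
          μ * moreauEnv γ l1norm (y - (Matrix.toEuclideanLin A p.1 + p.2))))
    (d₁ : EuclideanSpace ℝ (Fin n)) (d₂ : EuclideanSpace ℝ (Fin m))
    (hbad : ‖d₁‖ ^ 2 / (2 * σx ^ 2) + ‖d₂‖ ^ 2 / (2 * σε ^ 2)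
        < μ * ‖Matrix.toEuclideanLin A d₁ + d₂‖ ^ 2 / (2 * γ)) : False := by
  set T := Matrix.toEuclideanLin A with hT
  set w := T d₁ + d₂ with hwdef
  have hnn : (0:ℝ) ≤ ‖d₁‖ ^ 2 / (2 * σx ^ 2) + ‖d₂‖ ^ 2 / (2 * σε ^ 2) := by positivity
  have hw0 : 0 < ‖w‖ := by
    rcases (norm_nonneg w).eq_or_lt with h | h
    · exfalso
      rw [← h] at hbad
      norm_num at hbad
      linarith
    · exact h
  set h := γ / ‖w‖ with hh
  have hhpos : 0 < h := by positivity
  have hhw : h * ‖w‖ = γ := div_mul_cancel₀ γ (ne_of_gt hw0)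
  set p₁ : EuclideanSpace ℝ (Fin n) × EuclideanSpace ℝ (Fin m) := (h • d₁, y + h • d₂) with hp₁
  set p₂ : EuclideanSpace ℝ (Fin n) × EuclideanSpace ℝ (Fin m) := (-(h • d₁), y - h • d₂)
    with hp₂
  have hmid : (1/2 : ℝ) • p₁ + (1/2 : ℝ) • p₂
      = ((0 : EuclideanSpace ℝ (Fin n)), y) := by
    rw [hp₁, hp₂, Prod.ext_iff]
    constructor
    · show (1/2 : ℝ) • (h • d₁) + (1/2 : ℝ) • (-(h • d₁)) = 0
      module
    · show (1/2 : ℝ) • (y + h • d₂) + (1/2 : ℝ) • (y - h • d₂) = y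
      module
  have key := hconv.2 (Set.mem_univ p₁) (Set.mem_univ p₂)
    (by norm_num : (0:ℝ) ≤ 1/2) (by norm_num : (0:ℝ) ≤ 1/2) (by norm_num)
  rw [hmid] at key
  simp only [smul_eq_mul] at key
  -- env bounds
  have hcomp : ∀ i, |(h • w) i| ≤ γ := by
    intro i
    have : (h • w) i = h * w i := rfl
    rw [this, abs_mul, abs_of_pos hhpos]
    calc h * |w i| ≤ h * ‖w‖ := by
          exact mul_le_mul_of_nonneg_left (coord_le_norm w i) hhpos.le
      _ = γ := hhw
  have hcompn : ∀ i, |(-(h • w)) i| ≤ γ := by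
    intro i
    have : (-(h • w)) i = -((h • w) i) := rfl
    rw [this, abs_neg]
    exact hcomp i
  have henv1 : moreauEnv γ l1norm (-(h • w)) = h ^ 2 * ‖w‖ ^ 2 / (2 * γ) := by
    rw [moreau_small hγ _ hcompn, norm_neg, norm_smul, Real.norm_eq_abs,
      abs_of_pos hhpos, mul_pow]
  have henv2 : moreauEnv γ l1norm (h • w) = h ^ 2 * ‖w‖ ^ 2 / (2 * γ) := by
    rw [moreau_small hγ _ hcomp, norm_smul, Real.norm_eq_abs, abs_of_pos hhpos, mul_pow]
  -- residuals
  have hres1 : y - (T (h • d₁) + (y + h • d₂)) = -(h • w) := by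
    rw [hwdef, _root_.map_smul]
    module
  have hres2 : y - (T (-(h • d₁)) + (y - h • d₂)) = h • w := by
    rw [hwdef, _root_.map_neg, _root_.map_smul]
    module
  have hres0 : y - (T 0 + y) = 0 := by
    rw [_root_.map_zero]
    module
  rw [hres1, hres2, hres0] at key
  rw [henv1, henv2, moreau_zero hγ, norm_zero] at key
  have hn1 : ‖h • d₁‖ ^ 2 = h ^ 2 * ‖d₁‖ ^ 2 := by
    rw [norm_smul, Real.norm_eq_abs, abs_of_pos hhpos, mul_pow]
  have hn1' : ‖-(h • d₁)‖ ^ 2 = h ^ 2 * ‖d₁‖ ^ 2 := by rw [norm_neg]; exact hn1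
  have hpar : ‖y + h • d₂‖ ^ 2 + ‖y - h • d₂‖ ^ 2 = 2 * ‖y‖ ^ 2 + 2 * (h ^ 2 * ‖d₂‖ ^ 2) := by
    have ha := norm_add_sq_real y (h • d₂)
    have hb := norm_sub_sq_real y (h • d₂)
    have hc : ‖h • d₂‖ ^ 2 = h ^ 2 * ‖d₂‖ ^ 2 := by
      rw [norm_smul, Real.norm_eq_abs, abs_of_pos hhpos, mul_pow]
    linarith
  rw [hn1, hn1'] at key
  have hq : 0 < h ^ 2 * (μ * ‖w‖ ^ 2 / (2 * γ)
      - (‖d₁‖ ^ 2 / (2 * σx ^ 2) + ‖d₂‖ ^ 2 / (2 * σε ^ 2))) := by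
    apply mul_pos (by positivity)
    linarith
  have hpar' : ‖y + h • d₂‖ ^ 2 / (2 * σε ^ 2) + ‖y - h • d₂‖ ^ 2 / (2 * σε ^ 2)
      = 2 * ‖y‖ ^ 2 / (2 * σε ^ 2) + 2 * (h ^ 2 * ‖d₂‖ ^ 2) / (2 * σε ^ 2) := by
    rw [← add_div, hpar]
    ring
  ring_nf at key hpar' hq
  linarith

end Main

end SorrAux

/-- Proposition 3 of the paper, convexity condition for SORR.
`G(x, ε) := ½σ_x⁻²‖x‖₂² + ½σ_ε⁻²‖ε‖₂² − μ·(ᵞ‖·‖₁)(y − (Ax + ε))` is jointly convex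
in `(x, ε)` if and only if `μ·(σ_ε² + σ_x²·λ_max(AᵀA)) ≤ γ`. -/
theorem sorr_convexity_condition {m n : ℕ} (hm : 0 < m) (A : Matrix (Fin m) (Fin n) ℝ)
    (y : EuclideanSpace ℝ (Fin m)) (μ γ σx σε : ℝ)
    (hμ : 0 < μ) (hγ : 0 < γ) (hσx : 0 < σx) (hσε : 0 < σε) :
    ConvexOn ℝ Set.univ
        (fun p : EuclideanSpace ℝ (Fin n) × EuclideanSpace ℝ (Fin m) =>
          ‖p.1‖ ^ 2 / (2 * σx ^ 2) + ‖p.2‖ ^ 2 / (2 * σε ^ 2) -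
            μ * moreauEnv γ l1norm (y - (Matrix.toEuclideanLin A p.1 + p.2)))
      ↔ μ * (σε ^ 2 +
            σx ^ 2 * sSup {t : ℝ | ∃ v : Fin n → ℝ, v ≠ 0 ∧ (Aᵀ * A).mulVec v = t • v}) ≤ γ := by
  have hset : sSup {t : ℝ | ∃ v : Fin n → ℝ, v ≠ 0 ∧ (Aᵀ * A).mulVec v = t • v}
      = SorrAux.lam A := rfl
  rw [hset]
  constructor
  · intro hconv
    by_contra hc
    push_neg at hc
    obtain ⟨d₁, d₂, hbad⟩ := SorrAux.exists_bad A hm hμ hγ hσx hσε hc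
    exact SorrAux.violation A hμ hγ hσx hσε y hconv d₁ d₂ hbad
  · intro hcond
    exact SorrAux.suff A hμ hγ hσx hσε y hcond
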